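/- Let i = (i_1,...,i_n) be a sequence enumerating {1,...,n}, with β_{i,k} = s_{i_1}···s_{i_{k-1}}(α_{i_k}) (and β_{i,1}=α_{i_1}), and let c = s_{i_n}···s_{i_1}. For the rotated sequence i' = (i_2,...,i_n,i_1) with c' = s_{i_1}s_{i_n}···s_{i_2} and β_{i',k} defined analogously, the following hold for all r ≥ 0: s_{i_1}(c^{-r}(β_{i,k})) = c'^{-r}(β_{i',k-1}) for 2 ≤ k ≤ n, and s_{i_1}(c^{-r}(β_{i,1})) = c'^{-r+1}(β_{i',n}) for r > 0. -/
import Mathlib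


/-- The simple reflection s_i on ℤ^n: s_i(α_j) = α_j − c_{ij} α_i on basis vectors. -/
def reflS (n : ℕ) (C : Matrix (Fin n) (Fin n) ℤ) (i : Fin n) (x : Fin n → ℤ) : Fin n → ℤ :=
  fun k => x k - (if k = i then ∑ j, C i j * x j else 0)

/-- The simple root α_j (j-th standard basis vector). -/
def basisV (n : ℕ) (j : Fin n) : Fin n → ℤ := fun k => if k = j then 1 else 0

/-- Composite of simple reflections along a list, head acting outermost. -/
def applyL (n : ℕ) (C : Matrix (Fin n) (Fin n) ℤ) (L : List (Fin n)) (x : Fin n → ℤ) :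
    Fin n → ℤ :=
  L.foldr (reflS n C) x

/-- β_{i,k} (0-based: for a sequence L = (i₁,...,i_n), betaVec L k = 
s_{i₁}⋯s_{i_k}(α_{i_{k+1}}), and betaVec L 0 = α_{i₁}). -/
def betaVec (n : ℕ) (C : Matrix (Fin n) (Fin n) ℤ) (dflt : Fin n)
    (L : List (Fin n)) (k : ℕ) : Fin n → ℤ :=
  applyL n C (L.take k) (basisV n (L.getD k dflt))

lemma reflS_invol (n : ℕ) (C : Matrix (Fin n) (Fin n) ℤ) (hC : ∀ i, C i i = 2)
    (i : Fin n) (x : Fin n → ℤ) : reflS n C i (reflS n C i x) = x := by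
  have hsum : (∑ j, C i j * reflS n C i x j) = - ∑ j, C i j * x j := by
    simp only [reflS, mul_sub, Finset.sum_sub_distrib, mul_ite, mul_zero]
    rw [Finset.sum_ite_eq' Finset.univ i (fun j => C i j * ∑ k, C i k * x k)]
    simp [hC]
    ring
  funext k
  show reflS n C i x k - (if k = i then ∑ j, C i j * reflS n C i x j else 0) = x k
  rw [hsum]
  simp only [reflS]
  split <;> ring

lemma applyL_append (n : ℕ) (C : Matrix (Fin n) (Fin n) ℤ) (L M : List (Fin n))
    (x : Fin n → ℤ) : applyL n C (L ++ M) x = applyL n C L (applyL n C M x) := by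
  simp [applyL, List.foldr_append]

lemma key_comm (n : ℕ) (C : Matrix (Fin n) (Fin n) ℤ) (hC : ∀ i, C i i = 2)
    (i₁ : Fin n) (rest : List (Fin n)) (r : ℕ) (x : Fin n → ℤ) :
    reflS n C i₁ ((applyL n C (i₁ :: rest))^[r] x)
      = (applyL n C (rest ++ [i₁]))^[r] (reflS n C i₁ x) := by
  induction r generalizing x with
  | zero => rfl
  | succ r ih =>
    rw [Function.iterate_succ_apply, Function.iterate_succ_apply, ih]
    congr 1
    have e1 : applyL n C (i₁ :: rest) x = reflS n C i₁ (applyL n C rest x) := rfl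
    rw [e1, reflS_invol n C hC, applyL_append]
    have e2 : applyL n C [i₁] (reflS n C i₁ x) = x := reflS_invol n C hC i₁ x
    rw [e2]

/-- with c⁻¹ = s_{i₁}⋯s_{i_n} (for the sequence i = (i₁,...,i_n)) and
c'⁻¹ = s_{i₂}⋯s_{i_n}s_{i₁} for the rotated sequence i' = (i₂,...,i_n,i₁), one has,
for all r ≥ 0: s_{i₁}(c^{-r}(β_{i,k})) = c'^{-r}(β_{i',k-1}) for 2 ≤ k ≤ n (here in
0-based indexing: 1 ≤ k < n), and s_{i₁}(c^{-r}(β_{i,1})) = c'^{-(r-1)}(β_{i',n})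
for r > 0. -/
theorem stmt_7 (n : ℕ) (C : Matrix (Fin n) (Fin n) ℤ) (hC : ∀ i, C i i = 2)
    (i₁ : Fin n) (rest : List (Fin n))
    (hlen : (i₁ :: rest).length = n) (henum : ∀ j : Fin n, j ∈ i₁ :: rest) :
    (∀ (r k : ℕ), 1 ≤ k → k < n →
      reflS n C i₁ ((applyL n C (i₁ :: rest))^[r] (betaVec n C i₁ (i₁ :: rest) k))
        = (applyL n C (rest ++ [i₁]))^[r] (betaVec n C i₁ (rest ++ [i₁]) (k - 1))) ∧
    (∀ r : ℕ, 0 < r →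
      reflS n C i₁ ((applyL n C (i₁ :: rest))^[r] (betaVec n C i₁ (i₁ :: rest) 0))
        = (applyL n C (rest ++ [i₁]))^[r - 1] (betaVec n C i₁ (rest ++ [i₁]) (n - 1))) := by
  have hrest : rest.length = n - 1 := by
    simp at hlen; omega
  constructor
  · intro r k hk1 hkn
    rw [key_comm n C hC]
    congr 1
    -- s(β_{i,k}) = β_{i',k-1}
    obtain ⟨k, rfl⟩ : ∃ m, k = m + 1 := ⟨k - 1, by omega⟩
    have hk : k < rest.length := by omega
    show reflS n C i₁ (betaVec n C i₁ (i₁ :: rest) (k + 1))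
        = betaVec n C i₁ (rest ++ [i₁]) k
    unfold betaVec
    rw [List.take_succ_cons, List.getD_cons_succ]
    show reflS n C i₁ (applyL n C (i₁ :: rest.take k) _) = _
    have : applyL n C (i₁ :: rest.take k) (basisV n (rest.getD k i₁))
        = reflS n C i₁ (applyL n C (rest.take k) (basisV n (rest.getD k i₁))) := rfl
    rw [this, reflS_invol n C hC]
    rw [List.take_append_of_le_length (by omega), List.getD_append _ _ _ _ hk]
  · intro r hr
    obtain ⟨r, rfl⟩ : ∃ m, r = m + 1 := ⟨r - 1, by omega⟩
    rw [key_comm n C hC, Function.iterate_succ_apply]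
    simp only [Nat.add_sub_cancel]
    congr 1
    show applyL n C (rest ++ [i₁]) (reflS n C i₁ (basisV n i₁))
        = betaVec n C i₁ (rest ++ [i₁]) (n - 1)
    rw [applyL_append]
    have h1 : applyL n C [i₁] (reflS n C i₁ (basisV n i₁)) = basisV n i₁ :=
      reflS_invol n C hC i₁ _
    rw [h1]
    have htake : (rest ++ [i₁]).take (n - 1) = rest := by
      rw [List.take_append_of_le_length (by omega), List.take_of_length_le (by omega)]
    have hget : (rest ++ [i₁]).getD (n - 1) i₁ = i₁ := by
      rw [← hrest, List.getD_eq_getElem?_getD]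
      simp
    unfold betaVec
    rw [htake, hget]
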